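/- Let k ≥ 3 and n ∈ ℕ. Every integer t in the semi-closed interval T_n ≤ t < T_{n+1} appears as a component of some position in P_n; explicitly, writing t = T_n + j with 0 ≤ j ≤ n, the multiset consisting of k−3 copies of T_n together with T_n + n − j and T_n + j is a partition of (k-1)·T_n + n with all parts ≥ T_n containing t. -/

import Mathlib

/-- `T n` is the `n`-th triangular number `n(n+1)/2`. -/
def T (n : ℕ) : ℕ := n * (n + 1) / 2

/-- `Pset k n` is the set `Pₙ` of positions `(T n, m₁, …, m_{k-1})` (nondecreasing
`k`-tuples) whose first component is `T n` and whose remaining components sum to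
`(k-1)·T n + n` (each of them is automatically `≥ T n` by monotonicity). -/
def Pset (k : ℕ) [NeZero k] (n : ℕ) : Set (Fin k → ℕ) :=
  {u | Monotone u ∧ u 0 = T n ∧
    ∑ i ∈ Finset.univ.erase 0, u i = (k - 1) * T n + n}

/-- A raw move of the `k`-heap game (before re-sorting): either (i) remove a positive
number of tokens from at least one and at most `k-1` heaps, or (ii) remove the same
positive number `t` of tokens from all `k` heaps (`t` at most the smallest heap). -/
def MoveRaw (k : ℕ) (u w : Fin k → ℕ) : Prop :=
  ((∀ i, w i ≤ u i) ∧ u ≠ w ∧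
    (Finset.univ.filter fun i => w i < u i).card ≤ k - 1)
  ∨ (∃ t > 0, ∀ i, u i = w i + t)

/-- `v` is a follower of `u`: `v` is obtained from `u` by one move, with
the components re-sorted into nondecreasing order. -/
def Follower (k : ℕ) (u v : Fin k → ℕ) : Prop :=
  ∃ w : Fin k → ℕ, MoveRaw k u w ∧ Monotone v ∧ ∃ σ : Equiv.Perm (Fin k), v = w ∘ σ

/- For `t = T n + j` with `j ≤ n`, split the surplus `n` as `j + (n - j)`: the position
`(T n, …, T n, T n + min j (n - j), T n + max j (n - j))` lies in `Pₙ` and has `t` among its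
components. -/

theorem T_succ (n : ℕ) : T (n + 1) = T n + (n + 1) := by
  unfold T
  have h : (n + 1) * (n + 1 + 1) = n * (n + 1) + 2 * (n + 1) := by ring
  rw [h]
  omega

theorem exists_eq_T_add_of_mem_Ico {n t : ℕ} (ht1 : T n ≤ t) (ht2 : t < T (n + 1)) :
    ∃ j ≤ n, t = T n + j :=
  ⟨t - T n, by rw [T_succ] at ht2; omega, by omega⟩

section Partition

variable {k c n j : ℕ}

theorem card_replicate_add_pair (hk : 3 ≤ k) (x y : ℕ) :
    Multiset.card (Multiset.replicate (k - 3) c + {x, y}) = k - 1 := by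
  simp only [Multiset.card_add, Multiset.card_replicate, Multiset.insert_eq_cons,
    Multiset.card_cons, Multiset.card_singleton]
  omega

theorem le_of_mem_replicate_add_pair (x : ℕ)
    (hx : x ∈ Multiset.replicate (k - 3) c + ({c + (n - j), c + j} : Multiset ℕ)) : c ≤ x := by
  simp only [Multiset.mem_add, Multiset.mem_replicate, Multiset.insert_eq_cons,
    Multiset.mem_cons, Multiset.mem_singleton] at hx
  omega

theorem sum_replicate_add_pair (hk : 3 ≤ k) (hj : j ≤ n) :
    (Multiset.replicate (k - 3) c + ({c + (n - j), c + j} : Multiset ℕ)).sum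
      = (k - 1) * c + n := by
  simp only [Multiset.sum_add, Multiset.sum_replicate, smul_eq_mul, Multiset.insert_eq_cons,
    Multiset.sum_cons, Multiset.sum_singleton]
  obtain ⟨m, rfl⟩ : ∃ m, k = m + 3 := ⟨k - 3, by omega⟩
  obtain ⟨i, rfl⟩ : ∃ i, n = j + i := ⟨n - j, by omega⟩
  simp only [Nat.add_sub_cancel, Nat.add_sub_cancel_left, show m + 3 - 1 = m + 2 by omega]
  ring

theorem mem_replicate_add_pair :
    c + j ∈ Multiset.replicate (k - 3) c + ({c + (n - j), c + j} : Multiset ℕ) := by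
  simp

end Partition

def splitPosition (m c a b : ℕ) : Fin (m + 3) → ℕ := fun i =>
  c + if (i : ℕ) ≤ m then 0 else if (i : ℕ) = m + 1 then a else b

section SplitPosition

variable {m c a b : ℕ}

theorem splitPosition_monotone (hab : a ≤ b) : Monotone (splitPosition m c a b) := by
  intro i i' hii'
  have : (i : ℕ) ≤ i' := hii'
  unfold splitPosition
  split_ifs <;> omega

theorem splitPosition_zero : splitPosition m c a b 0 = c := by
  simp [splitPosition]

theorem splitPosition_penultimate : splitPosition m c a b ⟨m + 1, by omega⟩ = c + a := by
  simp [splitPosition]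

theorem splitPosition_last : splitPosition m c a b (Fin.last (m + 2)) = c + b := by
  simp [splitPosition]

theorem sum_splitPosition : ∑ i, splitPosition m c a b i = (m + 3) * c + (a + b) := by
  rw [Fin.sum_univ_castSucc, Fin.sum_univ_castSucc]
  have hbase : ∀ i : Fin (m + 1), splitPosition m c a b i.castSucc.castSucc = c := by
    intro i
    simp [splitPosition, Nat.le_of_lt_succ i.isLt]
  simp only [hbase, Finset.sum_const, Finset.card_univ, Fintype.card_fin, smul_eq_mul]
  rw [show (Fin.last (m + 1)).castSucc = (⟨m + 1, by omega⟩ : Fin (m + 3)) from rfl,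
    splitPosition_penultimate, splitPosition_last]
  ring

theorem sum_erase_zero_splitPosition :
    ∑ i ∈ Finset.univ.erase 0, splitPosition m c a b i = (m + 2) * c + (a + b) := by
  have h := Finset.add_sum_erase Finset.univ (splitPosition m c a b) (Finset.mem_univ 0)
  rw [sum_splitPosition, splitPosition_zero] at h
  linarith

theorem splitPosition_mem_Pset {n : ℕ} (hab : a ≤ b) (hn : a + b = n) :
    splitPosition m (T n) a b ∈ Pset (m + 3) n :=
  ⟨splitPosition_monotone hab, splitPosition_zero, by
    rw [sum_erase_zero_splitPosition, hn, show m + 3 - 1 = m + 2 by omega]⟩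

end SplitPosition

theorem exists_mem_Pset_apply_eq {k n j : ℕ} [NeZero k] (hk : 3 ≤ k) (hj : j ≤ n) :
    ∃ u ∈ Pset k n, ∃ i, u i = T n + j := by
  obtain ⟨m, rfl⟩ : ∃ m, k = m + 3 := ⟨k - 3, by omega⟩
  rcases le_total j (n - j) with h | h
  · exact ⟨_, splitPosition_mem_Pset h (by omega), _, splitPosition_penultimate⟩
  · exact ⟨_, splitPosition_mem_Pset h (by omega), _, splitPosition_last⟩

/-- Lemma 2, first part: every integer `t` with `T n ≤ t < T (n+1)`
appears as a component of some position in `Pₙ`; explicitly, writing `t = T n + j`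
with `0 ≤ j ≤ n`, the multiset of `k-3` copies of `T n` together with `T n + (n-j)`
and `T n + j` is a partition of `(k-1)·T n + n` into `k-1` parts all `≥ T n`
containing `t`. -/
theorem component_exists_in_Pn (k : ℕ) [NeZero k] (hk : 3 ≤ k) (n t : ℕ)
    (ht1 : T n ≤ t) (ht2 : t < T (n + 1)) :
    ∃ j ≤ n, t = T n + j ∧
      (Multiset.card (Multiset.replicate (k - 3) (T n) + {T n + (n - j), T n + j})
          = k - 1 ∧
        (∀ x ∈ Multiset.replicate (k - 3) (T n) + ({T n + (n - j), T n + j} : Multiset ℕ),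
          T n ≤ x) ∧
        (Multiset.replicate (k - 3) (T n) + ({T n + (n - j), T n + j} : Multiset ℕ)).sum
          = (k - 1) * T n + n ∧
        t ∈ Multiset.replicate (k - 3) (T n) + ({T n + (n - j), T n + j} : Multiset ℕ)) ∧
      ∃ u ∈ Pset k n, ∃ i, u i = t := by
  obtain ⟨j, hj, rfl⟩ := exists_eq_T_add_of_mem_Ico ht1 ht2
  exact ⟨j, hj, rfl,
    ⟨card_replicate_add_pair hk _ _, le_of_mem_replicate_add_pair, sum_replicate_add_pair hk hj,
      mem_replicate_add_pair⟩,
    exists_mem_Pset_apply_eq hk hj⟩
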